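/- arXiv:2303.05433 — 5 statements merged into one kernel-verified Lean document; each statement's English description precedes it below -/
import Mathlib

section
/- Let G be a group, H a subgroup of G, K a group, and P a set equipped with: (i) a right K-action that is free (p·k = p implies k = 1); (ii) a surjective map π̂: P → G/H satisfying π̂(p·k) = π̂(p) for all p ∈ P, k ∈ K, and such that whenever π̂(p) = π̂(q) there exists k ∈ K with q = p·k; (iii) a left G-action on P satisfying g·(p·k) = (g·p)·k and π̂(g·p) = g·π̂(p) for all g ∈ G, k ∈ K, p ∈ P. Then there exist a group homomorphism φ: H → K and a bijection f: G ×_φ K → P that is G-equivariant (f(g'·u) = g'·f(u)), K-equivariant (f(u·k) = f(u)·k), and satisfies π̂(f([g,k])) = gH for all g ∈ G, k ∈ K. -/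
/-- The relation on `G × K` identifying `(g, k)` with `(g h, φ(h)⁻¹ k)` for `h ∈ H`. -/
def assocRel {G K : Type*} [Group G] [Group K] (H : Subgroup G) (φ : H →* K) :
    G × K → G × K → Prop :=
  fun p q => ∃ h : H, q.1 = p.1 * (h : G) ∧ q.2 = (φ h)⁻¹ * p.2

/-- The associated set `G ×_φ K`, the quotient of `G × K` by `assocRel`. -/
def AssocSet {G K : Type*} [Group G] [Group K] (H : Subgroup G) (φ : H →* K) : Type _ :=
  Quot (assocRel H φ)

/-- The class `[g, k]` in `G ×_φ K`. -/
def AssocSet.mk {G K : Type*} [Group G] [Group K] {H : Subgroup G} (φ : H →* K)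
    (g : G) (k : K) : AssocSet H φ :=
  Quot.mk _ (g, k)

/-- The left `G`-action on `G ×_φ K`, `g' · [g, k] = [g' g, k]`. -/
def AssocSet.gSMul {G K : Type*} [Group G] [Group K] {H : Subgroup G} {φ : H →* K}
    (g' : G) : AssocSet H φ → AssocSet H φ :=
  Quot.lift (fun p => AssocSet.mk φ (g' * p.1) p.2) (by
    rintro ⟨g, k⟩ ⟨g'', k''⟩ ⟨h, h1, h2⟩
    exact Quot.sound ⟨h, by simp_all [mul_assoc], by simp_all⟩)

/-- The right `K`-action on `G ×_φ K`, `[g, k] · k' = [g, k k']`. -/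
def AssocSet.kSMul {G K : Type*} [Group G] [Group K] {H : Subgroup G} {φ : H →* K}
    (u : AssocSet H φ) (k' : K) : AssocSet H φ :=
  Quot.lift (fun p => AssocSet.mk φ p.1 (p.2 * k')) (by
    rintro ⟨g, k⟩ ⟨g'', k''⟩ ⟨h, h1, h2⟩
    exact Quot.sound ⟨h, by simp_all, by simp_all [mul_assoc]⟩) u

/-- The projection `G ×_φ K → G/H`, `[g, k] ↦ gH`. -/
def AssocSet.proj {G K : Type*} [Group G] [Group K] {H : Subgroup G} {φ : H →* K} :
    AssocSet H φ → G ⧸ H :=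
  Quot.lift (fun p => (QuotientGroup.mk p.1 : G ⧸ H)) (by
    rintro ⟨g, k⟩ ⟨g'', k''⟩ ⟨h, h1, h2⟩
    subst h1
    exact (QuotientGroup.mk_mul_of_mem g h.2).symm)

/-- (Lemma 3.2(1) of the paper, group-theoretic content.)
If a set `P` carries a free right `K`-action, a compatible surjective projection
`π̂ : P → G/H` whose fibres are the `K`-orbits, and a left `G`-action commuting with
the `K`-action and lifting the `G`-action on `G/H`, then there are a homomorphism
`φ : H → K` and a `G`- and `K`-equivariant bijection `f : G ×_φ K → P` over `G/H`. -/
theorem statement0 {G K : Type*} [Group G] [Group K] (H : Subgroup G)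
    (P : Type*) (gAct : G → P → P) (kAct : P → K → P) (πhat : P → G ⧸ H)
    -- (i) right `K`-action, free
    (hk_one : ∀ p, kAct p 1 = p)
    (hk_mul : ∀ p k k', kAct p (k * k') = kAct (kAct p k) k')
    (hk_free : ∀ p k, kAct p k = p → k = 1)
    -- (ii) `π̂` surjective, `K`-invariant, with fibres the `K`-orbits
    (hπ_surj : Function.Surjective πhat)
    (hπ_k : ∀ p k, πhat (kAct p k) = πhat p)
    (hπ_fib : ∀ p q, πhat p = πhat q → ∃ k, q = kAct p k)
    -- (iii) left `G`-action, commuting with `K`, lifting the action on `G/H`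
    (hg_one : ∀ p, gAct 1 p = p)
    (hg_mul : ∀ g g' p, gAct (g * g') p = gAct g (gAct g' p))
    (hgk : ∀ g p k, gAct g (kAct p k) = kAct (gAct g p) k)
    (hπ_g : ∀ g p, πhat (gAct g p) = g • πhat p) :
    ∃ (φ : H →* K) (f : AssocSet H φ → P),
      Function.Bijective f ∧
      (∀ (g' : G) (u : AssocSet H φ), f (AssocSet.gSMul g' u) = gAct g' (f u)) ∧
      (∀ (u : AssocSet H φ) (k : K), f (AssocSet.kSMul u k) = kAct (f u) k) ∧
      (∀ (g : G) (k : K), πhat (f (AssocSet.mk φ g k)) = (QuotientGroup.mk g : G ⧸ H)) := by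
  classical
  obtain ⟨p₀, hp₀⟩ := hπ_surj (QuotientGroup.mk (1 : G))
  have cancel : ∀ p (k k' : K), kAct p k = kAct p k' → k = k' := by
    intro p k k' h
    have h1 : kAct p (k * k'⁻¹) = p := by
      rw [hk_mul, h, ← hk_mul, mul_inv_cancel, hk_one]
    exact mul_inv_eq_one.mp (hk_free p _ h1)
  have mk_smul : ∀ (g x : G), g • (QuotientGroup.mk x : G ⧸ H) = QuotientGroup.mk (g * x) := by
    intro g x; rfl
  have key : ∀ h : H, ∃ k : K, gAct (h : G) p₀ = kAct p₀ k := by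
    intro h
    have : πhat (gAct (h : G) p₀) = πhat p₀ := by
      rw [hπ_g, hp₀, mk_smul, mul_one]
      exact QuotientGroup.eq.mpr (by simpa using h.2)
    obtain ⟨k, hk⟩ := hπ_fib p₀ (gAct (h : G) p₀) this.symm
    exact ⟨k, hk⟩
  set φ0 : H → K := fun h => Classical.choose (key h) with hφ0
  have hφ0spec : ∀ h : H, gAct (h : G) p₀ = kAct p₀ (φ0 h) :=
    fun h => Classical.choose_spec (key h)
  have hφone : φ0 1 = 1 := by
    apply cancel p₀
    rw [← hφ0spec 1, hk_one]
    simp [hg_one]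
  have hφmul : ∀ h h' : H, φ0 (h * h') = φ0 h * φ0 h' := by
    intro h h'
    apply cancel p₀
    rw [← hφ0spec (h * h'), hk_mul, ← hφ0spec h, ← hgk, ← hφ0spec h', ← hg_mul]
    norm_cast
  set φ : H →* K := ⟨⟨φ0, hφone⟩, hφmul⟩ with hφdef
  have hφeq : ∀ h : H, φ h = φ0 h := fun _ => rfl
  have fwd : ∀ p q : G × K, assocRel H φ p q →
      kAct (gAct p.1 p₀) p.2 = kAct (gAct q.1 p₀) q.2 := by
    rintro ⟨g, k⟩ ⟨g', k'⟩ ⟨h, h1, h2⟩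
    dsimp only at h1 h2 ⊢
    subst h1; subst h2
    rw [hg_mul, hφ0spec h, hgk, ← hk_mul]
    congr 1
    rw [hφeq, mul_inv_cancel_left]
  refine ⟨φ, Quot.lift (fun p => kAct (gAct p.1 p₀) p.2) fwd, ⟨?_, ?_⟩, ?_, ?_, ?_⟩
  · -- injective
    intro u v
    induction u using Quot.ind with | _ p =>
    induction v using Quot.ind with | _ q =>
    obtain ⟨g, k⟩ := p
    obtain ⟨g', k'⟩ := q
    intro huv
    dsimp only at huv
    have hπeq : (QuotientGroup.mk g : G ⧸ H) = QuotientGroup.mk g' := by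
      have := congrArg πhat huv
      rwa [hπ_k, hπ_k, hπ_g, hπ_g, hp₀, mk_smul, mul_one, mk_smul, mul_one] at this
    obtain ⟨h, hmem, hgh⟩ : ∃ h ∈ H, g' = g * h := by
      have := QuotientGroup.eq.mp hπeq
      exact ⟨g⁻¹ * g', this, by group⟩
    have hrep : gAct g' p₀ = kAct (gAct g p₀) (φ0 ⟨h, hmem⟩) := by
      rw [hgh, hg_mul, hφ0spec ⟨h, hmem⟩, hgk]
    rw [hrep, ← hk_mul] at huv
    have hk' : k = φ0 ⟨h, hmem⟩ * k' := cancel _ _ _ huv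
    refine Quot.sound ⟨⟨h, hmem⟩, hgh, ?_⟩
    dsimp only
    rw [hk', hφeq, inv_mul_cancel_left]
  · -- surjective
    intro p
    obtain ⟨g, hg⟩ : ∃ g : G, πhat p = QuotientGroup.mk g :=
      ⟨(πhat p).out, (QuotientGroup.out_eq' _).symm⟩
    have : πhat (gAct g p₀) = πhat p := by
      rw [hπ_g, hp₀, mk_smul, mul_one, hg]
    obtain ⟨k, hk⟩ := hπ_fib (gAct g p₀) p this
    exact ⟨Quot.mk _ (g, k), hk.symm⟩
  · -- G-equivariance
    intro g' u
    induction u using Quot.ind with | _ p =>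
    obtain ⟨g, k⟩ := p
    show kAct (gAct (g' * g) p₀) k = gAct g' (kAct (gAct g p₀) k)
    rw [hg_mul, hgk]
  · -- K-equivariance
    intro u k'
    induction u using Quot.ind with | _ p =>
    obtain ⟨g, k⟩ := p
    show kAct (gAct g p₀) (k * k') = kAct (kAct (gAct g p₀) k) k'
    rw [hk_mul]
  · -- projection
    intro g k
    show πhat (kAct (gAct g p₀) k) = _
    rw [hπ_k, hπ_g, hp₀, mk_smul, mul_one]
end

section
/- Let G be a group, H a subgroup of G, K a group, and P a set equipped with: (i) a free right K-action; (ii) a surjective map π̂: P → G/H satisfying π̂(p·k) = π̂(p) for all p, k, and such that π̂(p) = π̂(q) implies q = p·k for some k ∈ K; (iii) a left G-action on P satisfying g·(p·k) = (g·p)·k and π̂(g·p) = g·π̂(p). Make the product group G × K act on P by (g,k)·p := g·(p·k⁻¹). Then: (1) this G × K-action on P is transitive; (2) for any point p₀ ∈ P with π̂(p₀) = eH (e the identity of G), the first projection G × K → G restricts to a group isomorphism from the stabilizer of p₀ under the G × K-action onto H. -/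
/-! Turning the right `K`-action into the left action `k • p = p · k⁻¹`, the `G × K`-action is
`(g, k) • p = g • k • p`. Transitivity of `G` on `G/H` together with the fibres of `π̂` being the
`K`-orbits makes it transitive. Projecting the stabiliser of `p₀` to `G` lands exactly in the
stabiliser of `π̂ p₀ = eH`, which is `H`, and it is injective there because `K` acts freely. -/

namespace MulAction

attribute [local instance] prodOfSMulCommClass

variable {G K P X : Type*} [Group G] [Group K] [MulAction G P] [MulAction K P]
  [SMulCommClass G K P] [MulAction G X]

theorem injOn_fst_stabilizer_prod {p : P} (hfree : stabilizer K p = ⊥) :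
    Set.InjOn Prod.fst (stabilizer (G × K) p : Set (G × K)) := by
  rintro ⟨g, k⟩ hx ⟨g', k'⟩ hy (rfl : g = g')
  have hk : k • p = k' • p := smul_left_cancel g (hx.trans hy.symm)
  have hmem : k'⁻¹ * k ∈ stabilizer K p := by
    rw [mem_stabilizer_iff, mul_smul, hk, inv_smul_smul]
  rw [hfree, Subgroup.mem_bot, inv_mul_eq_one] at hmem
  rw [hmem]

theorem image_fst_stabilizer_prod (π : P → X) (hπ_g : ∀ (g : G) p, π (g • p) = g • π p)
    (hπ_k : ∀ (k : K) p, π (k • p) = π p) (hπ_fib : ∀ p q, π p = π q → ∃ k : K, k • p = q)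
    (p : P) :
    Prod.fst '' (stabilizer (G × K) p : Set (G × K)) = stabilizer G (π p) := by
  ext g
  constructor
  · rintro ⟨⟨g, k⟩, hx, rfl⟩
    change g • k • p = p at hx
    change g • π p = π p
    have := congrArg π hx
    rwa [hπ_g, hπ_k] at this
  · intro hg
    obtain ⟨k, hk⟩ := hπ_fib (g • p) p (by rw [hπ_g, hg])
    exact ⟨(g, k), by change g • k • p = p; rwa [smul_comm], rfl⟩

theorem isPretransitive_prod_of_fibres [IsPretransitive G X] (π : P → X)
    (hπ_g : ∀ (g : G) p, π (g • p) = g • π p) (hπ_fib : ∀ p q, π p = π q → ∃ k : K, k • p = q) :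
    IsPretransitive (G × K) P where
  exists_smul_eq p q := by
    obtain ⟨g, hg⟩ := exists_smul_eq G (π p) (π q)
    obtain ⟨k, hk⟩ := hπ_fib (g • p) q (by rw [hπ_g, hg])
    exact ⟨(g, k), by change g • k • p = q; rwa [smul_comm]⟩

end MulAction

theorem statement1_general {G K : Type*} [Group G] [Group K] (H : Subgroup G)
    (P : Type*) (gAct : G → P → P) (kAct : P → K → P) (πhat : P → G ⧸ H)
    -- (i) right `K`-action, free
    (hk_one : ∀ p, kAct p 1 = p)
    (hk_mul : ∀ p k k', kAct p (k * k') = kAct (kAct p k) k')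
    (hk_free : ∀ p k, kAct p k = p → k = 1)
    -- (ii) `π̂` surjective, `K`-invariant, with fibres the `K`-orbits
    (hπ_k : ∀ p k, πhat (kAct p k) = πhat p)
    (hπ_fib : ∀ p q, πhat p = πhat q → ∃ k, q = kAct p k)
    -- (iii) left `G`-action, commuting with `K`, lifting the action on `G/H`
    (hg_one : ∀ p, gAct 1 p = p)
    (hg_mul : ∀ g g' p, gAct (g * g') p = gAct g (gAct g' p))
    (hgk : ∀ g p k, gAct g (kAct p k) = kAct (gAct g p) k)
    (hπ_g : ∀ g p, πhat (gAct g p) = g • πhat p) :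
    -- (1) the `G × K`-action `(g,k) · p = g · (p · k⁻¹)` is transitive
    (∀ p q : P, ∃ (g : G) (k : K), gAct g (kAct p k⁻¹) = q) ∧
    -- (2) the stabiliser of a basepoint over `eH` is a subgroup of `G × K`
    -- on which the first projection is injective with image exactly `H`
    (∀ p₀ : P, πhat p₀ = (QuotientGroup.mk (1 : G) : G ⧸ H) →
      ∃ S : Subgroup (G × K),
        (S : Set (G × K)) = {x : G × K | gAct x.1 (kAct p₀ x.2⁻¹) = p₀} ∧
        Set.InjOn Prod.fst (S : Set (G × K)) ∧
        Prod.fst '' (S : Set (G × K)) = (H : Set G)) := by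
  let : MulAction G P := { smul := gAct, one_smul := hg_one, mul_smul := hg_mul }
  let : MulAction K P :=
    { smul := fun k p => kAct p k⁻¹
      one_smul := fun p => show kAct p 1⁻¹ = p by rw [inv_one, hk_one]
      mul_smul := fun k k' p => by
        change kAct p (k * k')⁻¹ = kAct (kAct p k'⁻¹) k⁻¹
        rw [mul_inv_rev, hk_mul] }
  have : SMulCommClass G K P := ⟨fun g k p => hgk g p k⁻¹⟩
  let := MulAction.prodOfSMulCommClass G K P
  have hπ_fib' (p q : P) (h : πhat p = πhat q) : ∃ k : K, k • p = q := by
    obtain ⟨k, rfl⟩ := hπ_fib p q h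
    exact ⟨k⁻¹, congrArg (kAct p) (inv_inv k)⟩
  have hπ_k' (k : K) (p : P) : πhat (k • p) = πhat p := hπ_k p k⁻¹
  refine ⟨fun p q => ?_, fun p₀ hp₀ => ⟨MulAction.stabilizer (G × K) p₀, rfl, ?_, ?_⟩⟩
  · have := MulAction.isPretransitive_prod_of_fibres πhat hπ_g hπ_fib'
    obtain ⟨⟨g, k⟩, h⟩ := MulAction.exists_smul_eq (G × K) p q
    exact ⟨g, k, h⟩
  · refine MulAction.injOn_fst_stabilizer_prod ((Subgroup.eq_bot_iff_forall _).2 fun k hk => ?_)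
    exact inv_eq_one.1 (hk_free p₀ k⁻¹ hk)
  · rw [MulAction.image_fst_stabilizer_prod πhat hπ_g hπ_k' hπ_fib', hp₀, MulAction.stabilizer_quotient]

/-- (Key step in the proof of the paper's Lemma 3.2.)
With `P` as in Lemma 3.2, the product group `G × K` acts on `P` by
`(g,k) · p := g · (p · k⁻¹)`; this action is transitive, and for any basepoint
`p₀` over `eH` the first projection restricts to a group isomorphism from the
stabiliser of `p₀` onto `H`. -/
theorem statement1 {G K : Type*} [Group G] [Group K] (H : Subgroup G)
    (P : Type*) (gAct : G → P → P) (kAct : P → K → P) (πhat : P → G ⧸ H)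
    -- (i) right `K`-action, free
    (hk_one : ∀ p, kAct p 1 = p)
    (hk_mul : ∀ p k k', kAct p (k * k') = kAct (kAct p k) k')
    (hk_free : ∀ p k, kAct p k = p → k = 1)
    -- (ii) `π̂` surjective, `K`-invariant, with fibres the `K`-orbits
    (hπ_surj : Function.Surjective πhat)
    (hπ_k : ∀ p k, πhat (kAct p k) = πhat p)
    (hπ_fib : ∀ p q, πhat p = πhat q → ∃ k, q = kAct p k)
    -- (iii) left `G`-action, commuting with `K`, lifting the action on `G/H`
    (hg_one : ∀ p, gAct 1 p = p)
    (hg_mul : ∀ g g' p, gAct (g * g') p = gAct g (gAct g' p))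
    (hgk : ∀ g p k, gAct g (kAct p k) = kAct (gAct g p) k)
    (hπ_g : ∀ g p, πhat (gAct g p) = g • πhat p) :
    -- (1) the `G × K`-action `(g,k) · p = g · (p · k⁻¹)` is transitive
    (∀ p q : P, ∃ (g : G) (k : K), gAct g (kAct p k⁻¹) = q) ∧
    -- (2) the stabiliser of a basepoint over `eH` is a subgroup of `G × K`
    -- on which the first projection is injective with image exactly `H`
    (∀ p₀ : P, πhat p₀ = (QuotientGroup.mk (1 : G) : G ⧸ H) →
      ∃ S : Subgroup (G × K),
        (S : Set (G × K)) = {x : G × K | gAct x.1 (kAct p₀ x.2⁻¹) = p₀} ∧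
        Set.InjOn Prod.fst (S : Set (G × K)) ∧
        Prod.fst '' (S : Set (G × K)) = (H : Set G)) :=
  statement1_general H P gAct kAct πhat hk_one hk_mul hk_free hπ_k hπ_fib hg_one hg_mul hgk hπ_g
end

section
/- Let G be a group, H a subgroup of G, K a group, and φ₁, φ₂: H → K group homomorphisms. There exists a bijection f: G ×_{φ₁} K → G ×_{φ₂} K that is G-equivariant, K-equivariant, and satisfies π_{φ₂}(f(u)) = π_{φ₁}(u) for all u ∈ G ×_{φ₁} K, if and only if there exists t ∈ K such that φ₂(h) = t φ₁(h) t⁻¹ for all h ∈ H. -/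
open Classical

/-- An invariant on the fiber over the identity coset: `[g,k] ↦ φ(g) * k` when `g ∈ H`. -/
noncomputable def AssocSet.fiberInv {G K : Type*} [Group G] [Group K] {H : Subgroup G}
    {φ : H →* K} : AssocSet H φ → Option K :=
  Quot.lift (fun p => if hp : p.1 ∈ H then some (φ ⟨p.1, hp⟩ * p.2) else none) (by
    rintro ⟨g, k⟩ ⟨g'', k''⟩ ⟨h, h1, h2⟩
    subst h1; subst h2
    dsimp only
    by_cases hg : g ∈ H
    · rw [dif_pos hg, dif_pos (H.mul_mem hg h.2)]
      have : (⟨g * (h : G), H.mul_mem hg h.2⟩ : H) = ⟨g, hg⟩ * h := rfl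
      rw [this, map_mul]
      group
    · rw [dif_neg hg, dif_neg (fun hc => hg (by simpa using H.mul_mem hc (H.inv_mem h.2)))])

theorem AssocSet.fiberInv_mk {G K : Type*} [Group G] [Group K] {H : Subgroup G} {φ : H →* K}
    (g : G) (hg : g ∈ H) (k : K) :
    AssocSet.fiberInv (AssocSet.mk φ g k) = some (φ ⟨g, hg⟩ * k) := dif_pos hg

/-- (Uniqueness up to conjugation in the paper's Lemma 3.2.)
For φ₁, φ₂ : H → K, there is a `G`- and `K`-equivariant bijection
`G ×_{φ₁} K → G ×_{φ₂} K` over `G/H` iff φ₁ and φ₂ are conjugate by an element of `K`. -/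
theorem statement3 {G K : Type*} [Group G] [Group K] (H : Subgroup G)
    (φ₁ φ₂ : H →* K) :
    (∃ f : AssocSet H φ₁ → AssocSet H φ₂,
      Function.Bijective f ∧
      (∀ (g' : G) (u : AssocSet H φ₁), f (AssocSet.gSMul g' u) = AssocSet.gSMul g' (f u)) ∧
      (∀ (u : AssocSet H φ₁) (k : K), f (AssocSet.kSMul u k) = AssocSet.kSMul (f u) k) ∧
      (∀ u : AssocSet H φ₁, AssocSet.proj (f u) = AssocSet.proj u)) ↔
    (∃ t : K, ∀ h : H, φ₂ h = t * φ₁ h * t⁻¹) := by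
  constructor
  · rintro ⟨f, -, hG, hK, hπ⟩
    obtain ⟨⟨g, k⟩, hgk⟩ := Quot.exists_rep (f (AssocSet.mk φ₁ 1 1))
    have hproj : AssocSet.proj (f (AssocSet.mk φ₁ 1 1)) = QuotientGroup.mk (1 : G) := hπ _
    rw [← hgk] at hproj
    have hg : g ∈ H := by
      have := QuotientGroup.eq.mp hproj
      simpa using this
    set t : K := φ₂ ⟨g, hg⟩ * k with ht
    have hu : f (AssocSet.mk φ₁ 1 1) = AssocSet.mk φ₂ 1 t := by
      rw [← hgk]
      exact (Quot.sound ⟨⟨g, hg⟩, by simp, by simp [ht]⟩).symm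
    refine ⟨t, fun h => ?_⟩
    have e1 : AssocSet.mk φ₁ 1 1 = AssocSet.mk φ₁ (h : G) ((φ₁ h)⁻¹) :=
      Quot.sound ⟨h, by simp, by simp⟩
    have e2 : AssocSet.mk φ₁ ((h : G) * 1) (1 * (φ₁ h)⁻¹) =
        AssocSet.gSMul (h : G) (AssocSet.kSMul (AssocSet.mk φ₁ 1 1) ((φ₁ h)⁻¹)) := rfl
    have e3 : f (AssocSet.mk φ₁ 1 1) =
        AssocSet.gSMul (h : G) (AssocSet.kSMul (f (AssocSet.mk φ₁ 1 1)) ((φ₁ h)⁻¹)) := by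
      conv_lhs => rw [e1]
      rw [show AssocSet.mk φ₁ (h : G) ((φ₁ h)⁻¹) =
          AssocSet.mk φ₁ ((h : G) * 1) (1 * (φ₁ h)⁻¹) by simp, e2, hG, hK]
    rw [hu] at e3
    have e4 : AssocSet.mk φ₂ 1 t = AssocSet.mk φ₂ ((h : G) * 1) (t * (φ₁ h)⁻¹) := e3
    have e5 := congrArg AssocSet.fiberInv e4
    rw [AssocSet.fiberInv_mk 1 H.one_mem t,
      AssocSet.fiberInv_mk ((h : G) * 1) (by simpa using h.2) (t * (φ₁ h)⁻¹)] at e5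
    have e6 : t = φ₂ h * (t * (φ₁ h)⁻¹) := by
      have hh : (⟨(h : G) * 1, by simpa using h.2⟩ : H) = h := Subtype.ext (mul_one _)
      have h1 : (⟨(1 : G), H.one_mem⟩ : H) = (1 : H) := rfl
      rw [hh, h1, map_one, one_mul] at e5
      exact Option.some_injective K e5
    have e7 : t * φ₁ h = φ₂ h * t := by
      conv_lhs => rw [e6]
      group
    rw [e7]
    group
  · rintro ⟨t, ht⟩
    have wd : ∀ (p q : G × K), assocRel H φ₁ p q →
        AssocSet.mk φ₂ p.1 (t * p.2) = AssocSet.mk φ₂ q.1 (t * q.2) := by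
      rintro ⟨g, k⟩ ⟨g'', k''⟩ ⟨h, h1, h2⟩
      refine Quot.sound ⟨h, by simp_all, ?_⟩
      rw [h2, ht h]
      group
    have wd' : ∀ (p q : G × K), assocRel H φ₂ p q →
        AssocSet.mk φ₁ p.1 (t⁻¹ * p.2) = AssocSet.mk φ₁ q.1 (t⁻¹ * q.2) := by
      rintro ⟨g, k⟩ ⟨g'', k''⟩ ⟨h, h1, h2⟩
      refine Quot.sound ⟨h, by simp_all, ?_⟩
      rw [h2, show (φ₂ h)⁻¹ = t * (φ₁ h)⁻¹ * t⁻¹ by rw [ht h]; group]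
      group
    refine ⟨Quot.lift (fun p => AssocSet.mk φ₂ p.1 (t * p.2)) wd, ⟨?_, ?_⟩, ?_, ?_, ?_⟩
    · have hinv : ∀ u : AssocSet H φ₁,
          Quot.lift (fun p : G × K => AssocSet.mk φ₁ p.1 (t⁻¹ * p.2)) wd'
            (Quot.lift (fun p : G × K => AssocSet.mk φ₂ p.1 (t * p.2)) wd u) = u := by
        rintro ⟨⟨g, k⟩⟩
        exact congrArg (Quot.mk _) (by simp [AssocSet.mk])
      intro a b hab
      rw [← hinv a, ← hinv b]
      exact congrArg _ hab
    · rintro ⟨⟨g, k⟩⟩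
      exact ⟨AssocSet.mk φ₁ g (t⁻¹ * k), congrArg (Quot.mk _) (by simp [AssocSet.mk])⟩
    · rintro g' ⟨⟨g, k⟩⟩; rfl
    · rintro ⟨⟨g, k⟩⟩ k'
      exact congrArg (Quot.mk _) (by simp [AssocSet.mk, mul_assoc])
    · rintro ⟨⟨g, k⟩⟩; rfl
end

section
/- Let G be a group, H a subgroup of G, and let λ: K → L be a surjective group homomorphism and η: H → L a group homomorphism. Let P be a set equipped with: a free right K-action; a left G-action satisfying g·(p·k) = (g·p)·k; and a map f: P → G ×_η L satisfying f(p·k) = f(p)·λ(k) and f(g·p) = g·f(p) for all g ∈ G, k ∈ K, p ∈ P. Assume moreover that the composite π := π_η ∘ f: P → G/H is surjective and that π(p) = π(q) implies q = p·k for some k ∈ K. Then there exist a group homomorphism η̃: H → K with λ ∘ η̃ = η and a bijection Ψ: G ×_{η̃} K → P that is G-equivariant, K-equivariant, and satisfies f(Ψ([g,k])) = [g, λ(k)] for all g ∈ G, k ∈ K. -/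
theorem assocRel_equivalence {G K : Type*} [Group G] [Group K] (H : Subgroup G) (φ : H →* K) :
    Equivalence (assocRel H φ) := by
  constructor
  · intro p; exact ⟨1, by simp, by simp⟩
  · rintro p q ⟨h, h1, h2⟩
    exact ⟨h⁻¹, by simp [h1, mul_assoc], by simp [h2, mul_assoc]⟩
  · rintro p q r ⟨h, h1, h2⟩ ⟨h', h1', h2'⟩
    exact ⟨h * h', by simp [h1', h1, mul_assoc], by simp [h2', h2, mul_assoc]⟩

theorem assocRel_of_mk_eq {G K : Type*} [Group G] [Group K] {H : Subgroup G} {φ : H →* K}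
    {p q : G × K} (e : Quot.mk (assocRel H φ) p = Quot.mk (assocRel H φ) q) :
    assocRel H φ p q :=
  ((assocRel_equivalence H φ).eqvGen_iff).mp (Quot.eq.mp e)

theorem AssocSet.mk_one_inj {G K : Type*} [Group G] [Group K] {H : Subgroup G} {φ : H →* K}
    {k k' : K} (e : AssocSet.mk φ 1 k = AssocSet.mk φ 1 k') : k = k' := by
  obtain ⟨h, h1, h2⟩ := assocRel_of_mk_eq e
  have hh : (h : G) = 1 := by simpa using h1.symm
  have : h = 1 := Subtype.ext hh
  subst this
  simpa using h2.symm

/-- (Existence part of the paper's Lemma 3.5.)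
Given a surjective homomorphism `λ : K → L`, a homomorphism `η : H → L`, and a
`G`-equivariant lift `P` (with free right `K`-action) of the structure group of
`G ×_η L` to `K` along `λ`, there are a homomorphism `η̃ : H → K` with `λ ∘ η̃ = η`
and a `G`- and `K`-equivariant bijection `Ψ : G ×_{η̃} K → P` covering the identity
of `G ×_η L`. -/
theorem statement4 {G K L : Type*} [Group G] [Group K] [Group L] (H : Subgroup G)
    (lam : K →* L) (hlam_surj : Function.Surjective lam) (η : H →* L)
    (P : Type*) (gAct : G → P → P) (kAct : P → K → P)
    -- free right `K`-action
    (hk_one : ∀ p, kAct p 1 = p)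
    (hk_mul : ∀ p k k', kAct p (k * k') = kAct (kAct p k) k')
    (hk_free : ∀ p k, kAct p k = p → k = 1)
    -- left `G`-action commuting with the `K`-action
    (hg_one : ∀ p, gAct 1 p = p)
    (hg_mul : ∀ g g' p, gAct (g * g') p = gAct g (gAct g' p))
    (hgk : ∀ g p k, gAct g (kAct p k) = kAct (gAct g p) k)
    -- the bundle map `f : P → G ×_η L`
    (f : P → AssocSet H η)
    (hf_k : ∀ p k, f (kAct p k) = AssocSet.kSMul (f p) (lam k))
    (hf_g : ∀ g p, f (gAct g p) = AssocSet.gSMul g (f p))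
    -- `π := π_η ∘ f` is surjective and its fibres are the `K`-orbits
    (hπ_surj : Function.Surjective (fun p => AssocSet.proj (f p)))
    (hπ_fib : ∀ p q : P, AssocSet.proj (f p) = AssocSet.proj (f q) → ∃ k, q = kAct p k) :
    ∃ ηtilde : H →* K,
      (∀ h : H, lam (ηtilde h) = η h) ∧
      ∃ Ψ : AssocSet H ηtilde → P,
        Function.Bijective Ψ ∧
        (∀ (g' : G) (u : AssocSet H ηtilde), Ψ (AssocSet.gSMul g' u) = gAct g' (Ψ u)) ∧
        (∀ (u : AssocSet H ηtilde) (k : K), Ψ (AssocSet.kSMul u k) = kAct (Ψ u) k) ∧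
        (∀ (g : G) (k : K), f (Ψ (AssocSet.mk ηtilde g k)) = AssocSet.mk η g (lam k)) := by
  classical
  -- cancellation for the free right K-action
  have hk_cancel : ∀ (p : P) (k k' : K), kAct p k = kAct p k' → k = k' := by
    intro p k k' e
    have e2 : kAct p (k' * k⁻¹) = p := by
      rw [hk_mul, ← e, ← hk_mul]
      simp [hk_one]
    have := hk_free p _ e2
    exact (mul_inv_eq_one.mp this).symm
  -- basepoint over the class of 1, normalized so that `f p₀ = [1,1]`
  obtain ⟨p₁, hp₁⟩ := hπ_surj (QuotientGroup.mk (1 : G))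
  obtain ⟨⟨g₀, l₀⟩, hrep⟩ := Quot.exists_rep (f p₁)
  have hg₀ : g₀ ∈ H := by
    have h1 : AssocSet.proj (f p₁) = QuotientGroup.mk (1 : G) := hp₁
    rw [← hrep] at h1
    have h2 : g₀⁻¹ * 1 ∈ H := QuotientGroup.eq.mp h1
    have h3 : g₀⁻¹ ∈ H := by simpa using h2
    exact inv_mem_iff.mp h3
  set h₀ : H := ⟨g₀, hg₀⟩ with hh₀
  have hfp₁ : f p₁ = AssocSet.mk η 1 (η h₀ * l₀) := by
    rw [← hrep]
    refine (Quot.sound ⟨h₀, ?_, ?_⟩).symm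
    · simp [hh₀]
    · simp
  obtain ⟨k₁, hk₁⟩ := hlam_surj (η h₀ * l₀)⁻¹
  obtain ⟨p₀, hp₀def⟩ : ∃ p₀, p₀ = kAct p₁ k₁ := ⟨_, rfl⟩
  have hfp₀ : f p₀ = AssocSet.mk η 1 1 := by
    rw [hp₀def, hf_k, hfp₁, hk₁]
    show AssocSet.mk η 1 ((η h₀ * l₀) * (η h₀ * l₀)⁻¹) = AssocSet.mk η 1 1
    rw [mul_inv_cancel]
  -- the lift of η on points: for h ∈ H, `h · p₀ = p₀ · (etaFun h)` uniquely
  have key : ∀ h : H, ∃! k : K, gAct (h : G) p₀ = kAct p₀ k := by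
    intro h
    have hproj : AssocSet.proj (f p₀) = AssocSet.proj (f (gAct (h : G) p₀)) := by
      rw [hf_g, hfp₀]
      show QuotientGroup.mk (1 : G) = QuotientGroup.mk ((h : G) * 1)
      rw [mul_one]
      exact QuotientGroup.eq.mpr (by simpa using h.2)
    obtain ⟨k, hk⟩ := hπ_fib p₀ (gAct (h : G) p₀) hproj
    exact ⟨k, hk, fun k' hk' => hk_cancel p₀ k' k (hk'.symm.trans hk)⟩
  let etaFun : H → K := fun h => (key h).choose
  have hspec : ∀ h : H, gAct (h : G) p₀ = kAct p₀ (etaFun h) := fun h => (key h).choose_spec.1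
  have huniq : ∀ (h : H) (k : K), gAct (h : G) p₀ = kAct p₀ k → etaFun h = k := by
    intro h k hk
    exact ((key h).choose_spec.2 k hk).symm
  -- etaFun is a homomorphism
  have hmul : ∀ a b : H, etaFun (a * b) = etaFun a * etaFun b := by
    intro a b
    apply huniq
    have hc : ((a * b : H) : G) = (a : G) * (b : G) := rfl
    rw [hc, hg_mul, hspec b, hgk, hspec a, ← hk_mul]
  refine ⟨MonoidHom.mk' etaFun hmul, ?_, ?_⟩
  · -- λ ∘ η̃ = η
    intro h
    have e1 : f (gAct (h : G) p₀) = AssocSet.mk η 1 (η h) := by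
      rw [hf_g, hfp₀]
      show AssocSet.mk η ((h : G) * 1) 1 = AssocSet.mk η 1 (η h)
      rw [mul_one]
      refine (Quot.sound ⟨h, by simp, by simp⟩).symm
    have e2 : f (kAct p₀ (etaFun h)) = AssocSet.mk η 1 (lam (etaFun h)) := by
      rw [hf_k, hfp₀]
      show AssocSet.mk η 1 (1 * lam (etaFun h)) = _
      rw [one_mul]
    have e3 : AssocSet.mk η 1 (lam (etaFun h)) = AssocSet.mk η 1 (η h) := by
      rw [← e2, ← hspec h, e1]
    exact AssocSet.mk_one_inj e3
  · -- the bijection Ψ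
    set ηt : H →* K := MonoidHom.mk' etaFun hmul with hηt
    have wellDef : ∀ a b : G × K, assocRel H ηt a b →
        kAct (gAct a.1 p₀) a.2 = kAct (gAct b.1 p₀) b.2 := by
      rintro ⟨g, k⟩ ⟨g', k'⟩ ⟨h, h1, h2⟩
      simp only at h1 h2
      subst h1; subst h2
      rw [hg_mul, hspec h, hgk, ← hk_mul]
      exact congrArg (kAct (gAct g p₀)) ((mul_inv_cancel_left (ηt h) k).symm)
    refine ⟨Quot.lift (fun p : G × K => kAct (gAct p.1 p₀) p.2) wellDef, ?_, ?_, ?_, ?_⟩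
    · constructor
      · -- injective
        intro u v e
        obtain ⟨⟨g, k⟩, rfl⟩ := Quot.exists_rep u
        obtain ⟨⟨g', k'⟩, rfl⟩ := Quot.exists_rep v
        change kAct (gAct g p₀) k = kAct (gAct g' p₀) k' at e
        have hform : ∀ (a : G) (b : K), f (kAct (gAct a p₀) b) = AssocSet.mk η a (lam b) := by
          intro a b
          rw [hf_k, hf_g, hfp₀]
          show AssocSet.mk η (a * 1) (1 * lam b) = _
          rw [mul_one, one_mul]
        have hproj : (QuotientGroup.mk g : G ⧸ H) = QuotientGroup.mk g' := by
          have := congrArg (fun p => AssocSet.proj (f p)) e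
          simp only [hform] at this
          exact this
        have hmem : g⁻¹ * g' ∈ H := QuotientGroup.eq.mp hproj
        set h : H := ⟨g⁻¹ * g', hmem⟩ with hh
        have hg' : g' = g * (h : G) := by simp [hh]
        rw [hg', hg_mul, hspec h, hgk, ← hk_mul] at e
        have hkk : k = etaFun h * k' := hk_cancel _ _ _ e
        refine Quot.sound ⟨h, hg', ?_⟩
        show k' = (ηt h)⁻¹ * k
        rw [hkk]
        show k' = (etaFun h)⁻¹ * (etaFun h * k')
        rw [inv_mul_cancel_left]
      · -- surjective
        intro p
        obtain ⟨g, hg⟩ := Quot.exists_rep (AssocSet.proj (f p))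
        have hproj : AssocSet.proj (f (gAct g p₀)) = AssocSet.proj (f p) := by
          rw [hf_g, hfp₀]
          show QuotientGroup.mk (g * 1) = _
          rw [mul_one]
          exact hg
        obtain ⟨k, hk⟩ := hπ_fib (gAct g p₀) p hproj
        exact ⟨AssocSet.mk ηt g k, hk.symm⟩
    · -- G-equivariance
      intro g' u
      obtain ⟨⟨g, k⟩, rfl⟩ := Quot.exists_rep u
      show kAct (gAct (g' * g) p₀) k = gAct g' (kAct (gAct g p₀) k)
      rw [hgk, ← hg_mul]
    · -- K-equivariance
      intro u k
      obtain ⟨⟨g, k'⟩, rfl⟩ := Quot.exists_rep u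
      show kAct (gAct g p₀) (k' * k) = kAct (kAct (gAct g p₀) k') k
      exact hk_mul _ _ _
    · -- covering the identity of G ×_η L
      intro g k
      show f (kAct (gAct g p₀) k) = AssocSet.mk η g (lam k)
      rw [hf_k, hf_g, hfp₀]
      show AssocSet.mk η (g * 1) (1 * lam k) = _
      rw [mul_one, one_mul]
end

section
/- Let G be a group, H a subgroup of G, λ: K → L a surjective group homomorphism, and η̃₁, η̃₂: H → K group homomorphisms with λ ∘ η̃₁ = λ ∘ η̃₂ =: η. For i = 1, 2 let q_i: G ×_{η̃ᵢ} K → G ×_η L denote the map [g,k] ↦ [g, λ(k)]. Then there exists a bijection f: G ×_{η̃₁} K → G ×_{η̃₂} K that is G-equivariant, K-equivariant, and satisfies q₂ ∘ f = q₁, if and only if there exists t ∈ ker λ such that η̃₂(h) = t η̃₁(h) t⁻¹ for all h ∈ H. -/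
/-- The map `G ×_{η̃} K → G ×_η L`, `[g, k] ↦ [g, λ(k)]`, for `λ ∘ η̃ = η`. -/
def AssocSet.pushforward {G K L : Type*} [Group G] [Group K] [Group L] {H : Subgroup G}
    (lam : K →* L) (ηtilde : H →* K) (η : H →* L) (hcomp : ∀ h : H, lam (ηtilde h) = η h) :
    AssocSet H ηtilde → AssocSet H η :=
  Quot.lift (fun p => AssocSet.mk η p.1 (lam p.2)) (by
    rintro ⟨g, k⟩ ⟨g'', k''⟩ ⟨h, h1, h2⟩
    refine Quot.sound ⟨h, h1, ?_⟩
    rw [h2, map_mul, map_inv, hcomp])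

theorem AssocSet.mk_eq_iff {G K : Type*} [Group G] [Group K] {H : Subgroup G} (φ : H →* K)
    {g g' : G} {k k' : K} :
    AssocSet.mk φ g k = AssocSet.mk φ g' k' ↔ ∃ h : H, g' = g * h ∧ k' = (φ h)⁻¹ * k := by
  constructor
  · intro hEq
    exact (Equivalence.eqvGen_iff (assocRel_equivalence H φ)).mp (Quot.eqvGen_exact hEq)
  · intro hr; exact Quot.sound hr

/-- (Uniqueness part of the paper's Lemma 3.5.)
For `η̃₁, η̃₂ : H → K` with `λ ∘ η̃₁ = λ ∘ η̃₂ = η`, there is a `G`- and `K`-equivariant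
bijection `G ×_{η̃₁} K → G ×_{η̃₂} K` commuting with the maps `qᵢ : [g,k] ↦ [g, λ(k)]`
to `G ×_η L` iff `η̃₁` and `η̃₂` are conjugate by an element of `ker λ`. -/
theorem statement5 {G K L : Type*} [Group G] [Group K] [Group L] (H : Subgroup G)
    (lam : K →* L) (hlam_surj : Function.Surjective lam) (η : H →* L)
    (ηtilde₁ ηtilde₂ : H →* K)
    (h₁ : ∀ h : H, lam (ηtilde₁ h) = η h) (h₂ : ∀ h : H, lam (ηtilde₂ h) = η h) :
    (∃ f : AssocSet H ηtilde₁ → AssocSet H ηtilde₂,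
      Function.Bijective f ∧
      (∀ (g' : G) (u : AssocSet H ηtilde₁), f (AssocSet.gSMul g' u) = AssocSet.gSMul g' (f u)) ∧
      (∀ (u : AssocSet H ηtilde₁) (k : K), f (AssocSet.kSMul u k) = AssocSet.kSMul (f u) k) ∧
      (∀ u : AssocSet H ηtilde₁,
        AssocSet.pushforward lam ηtilde₂ η h₂ (f u) = AssocSet.pushforward lam ηtilde₁ η h₁ u)) ↔
    (∃ t ∈ MonoidHom.ker lam, ∀ h : H, ηtilde₂ h = t * ηtilde₁ h * t⁻¹) := by
  constructor
  · rintro ⟨f, -, hg, hk, hq⟩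
    -- analyze f [1,1]
    obtain ⟨⟨g₀, k₀⟩, hrep⟩ := Quot.exists_rep (f (AssocSet.mk ηtilde₁ 1 1))
    have hrep' : f (AssocSet.mk ηtilde₁ 1 1) = AssocSet.mk ηtilde₂ g₀ k₀ := hrep.symm
    have hproj : AssocSet.mk η g₀ (lam k₀) = AssocSet.mk η 1 (lam 1) := by
      have := hq (AssocSet.mk ηtilde₁ 1 1)
      rw [hrep'] at this
      exact this
    rw [map_one] at hproj
    obtain ⟨h, hg1, hk1⟩ := (AssocSet.mk_eq_iff η).mp hproj
    -- t := ηtilde₂(h)⁻¹ * k₀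
    set t : K := (ηtilde₂ h)⁻¹ * k₀ with ht_def
    have hu : f (AssocSet.mk ηtilde₁ 1 1) = AssocSet.mk ηtilde₂ 1 t := by
      rw [hrep']
      exact Quot.sound ⟨h, hg1, rfl⟩
    have htker : t ∈ MonoidHom.ker lam := by
      have : (1 : L) = (η h)⁻¹ * lam k₀ := hk1
      simp only [MonoidHom.mem_ker, ht_def, map_mul, map_inv, h₂]
      rw [← this]
    refine ⟨t, htker, fun h' => ?_⟩
    have key1 : AssocSet.mk ηtilde₁ 1 1
        = AssocSet.mk ηtilde₁ (h' : G) ((ηtilde₁ h')⁻¹) := by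
      exact Quot.sound ⟨h', by simp, by simp⟩
    have key2 : AssocSet.mk ηtilde₁ (h' : G) ((ηtilde₁ h')⁻¹)
        = AssocSet.gSMul (h' : G) (AssocSet.kSMul (AssocSet.mk ηtilde₁ 1 1) (ηtilde₁ h')⁻¹) := by
      show _ = AssocSet.mk ηtilde₁ ((h' : G) * 1) (1 * (ηtilde₁ h')⁻¹)
      rw [mul_one, one_mul]
    have key3 : AssocSet.mk ηtilde₂ 1 t
        = AssocSet.mk ηtilde₂ ((h' : G) * 1) (t * (ηtilde₁ h')⁻¹) := by
      calc AssocSet.mk ηtilde₂ 1 t = f (AssocSet.mk ηtilde₁ 1 1) := hu.symm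
        _ = f (AssocSet.gSMul (h' : G) (AssocSet.kSMul (AssocSet.mk ηtilde₁ 1 1)
              (ηtilde₁ h')⁻¹)) := by rw [← key2, ← key1]
        _ = AssocSet.gSMul (h' : G) (AssocSet.kSMul (f (AssocSet.mk ηtilde₁ 1 1))
              (ηtilde₁ h')⁻¹) := by rw [hg, hk]
        _ = AssocSet.mk ηtilde₂ ((h' : G) * 1) (t * (ηtilde₁ h')⁻¹) := by rw [hu]; rfl
    obtain ⟨h'', hg2, hk2⟩ := (AssocSet.mk_eq_iff ηtilde₂).mp key3
    have hh'' : h'' = h' := by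
      ext
      have := hg2.symm
      simpa using this
    rw [hh''] at hk2
    have h5 : ηtilde₂ h' * (t * (ηtilde₁ h')⁻¹) = t := by rw [hk2]; group
    calc ηtilde₂ h' = ηtilde₂ h' * (t * (ηtilde₁ h')⁻¹) * (ηtilde₁ h' * t⁻¹) := by group
      _ = t * (ηtilde₁ h' * t⁻¹) := by rw [h5]
      _ = t * ηtilde₁ h' * t⁻¹ := by group
  · rintro ⟨t, htker, hconj⟩
    have hlamt : lam t = 1 := htker
    have hwd : ∀ (p q : G × K), assocRel H ηtilde₁ p q →
        AssocSet.mk ηtilde₂ p.1 (t * p.2) = AssocSet.mk ηtilde₂ q.1 (t * q.2) := by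
      rintro ⟨g, k⟩ ⟨g', k'⟩ ⟨h, hgr, hkr⟩
      refine Quot.sound ⟨h, hgr, ?_⟩
      rw [hkr, hconj h]
      group
    have hwd' : ∀ (p q : G × K), assocRel H ηtilde₂ p q →
        AssocSet.mk ηtilde₁ p.1 (t⁻¹ * p.2) = AssocSet.mk ηtilde₁ q.1 (t⁻¹ * q.2) := by
      rintro ⟨g, k⟩ ⟨g', k'⟩ ⟨h, hgr, hkr⟩
      refine Quot.sound ⟨h, hgr, ?_⟩
      rw [hkr, hconj h]
      group
    refine ⟨Quot.lift (fun p => AssocSet.mk ηtilde₂ p.1 (t * p.2)) hwd, ?_, ?_, ?_, ?_⟩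
    · refine Function.bijective_iff_has_inverse.mpr
        ⟨Quot.lift (fun p => AssocSet.mk ηtilde₁ p.1 (t⁻¹ * p.2)) hwd', ?_, ?_⟩
      · intro u
        induction u using Quot.ind with
        | _ p =>
          show AssocSet.mk ηtilde₁ p.1 (t⁻¹ * (t * p.2)) = AssocSet.mk ηtilde₁ p.1 p.2
          rw [inv_mul_cancel_left]
      · intro u
        induction u using Quot.ind with
        | _ p =>
          show AssocSet.mk ηtilde₂ p.1 (t * (t⁻¹ * p.2)) = AssocSet.mk ηtilde₂ p.1 p.2
          rw [mul_inv_cancel_left]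
    · intro g' u
      induction u using Quot.ind with
      | _ p => rfl
    · intro u k
      induction u using Quot.ind with
      | _ p =>
        show AssocSet.mk ηtilde₂ p.1 (t * (p.2 * k)) = AssocSet.mk ηtilde₂ p.1 (t * p.2 * k)
        rw [mul_assoc]
    · intro u
      induction u using Quot.ind with
      | _ p =>
        show AssocSet.mk η p.1 (lam (t * p.2)) = AssocSet.mk η p.1 (lam p.2)
        rw [map_mul, hlamt, one_mul]
end
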